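/- Let k, n be integers with 2 ≤ k ≤ n/2, let R be a commutative ring, and let M be a k × n matrix over R. For every r ∈ ℤ/nℤ and every m in the cyclic closed interval [r+k, r−2], the determinant of the (k+1) × (k+1) matrix whose (i,j) entry (1 ≤ i,j ≤ k+1) is P([r+i−1]^{k−1} ∪ {m+j−1}) equals 0. -/

import Mathlib

/-!
List a `k`-set `I` in cyclic order starting from `r` instead of from `1`. Moving the base point
from `r` to `1` rotates that list, which multiplies the determinant by `(-1)^((k-1)c)`, where `c`
counts the elements of `I` passed on the way; `c` is additive over `[r+i]^{k-1} ∪ {m+j}`. Listed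
from `r`, the column `m+j` comes before the whole segment or after it according as `m+j` has
wrapped past `r` or not, independently of `i`. Hence the `(i,j)` entry is
`s_i t_j det(A_i | M_{m+j})` for signs `s_i`, `t_j` and the `k × (k-1)` matrix `A_i` of the
segment (both sides vanish when `m+j` lies in the segment). Since `det(A_i | x)` is linear in
`x ∈ R^k`, the matrix of these determinants is a product of a `(k+1) × k` and a `k × (k+1)`
matrix, so it is singular.
-/

/-- Representative of `x : ZMod n` in `{1, …, n}`. -/
def rep (n : ℕ) (x : ZMod n) : ℕ := if x.val = 0 then n else x.val

/-- The cyclic segment `[r]^ℓ = {r, r+1, …, r+ℓ-1}` in `ZMod n`. -/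
def cSeg (n : ℕ) (r : ZMod n) (ℓ : ℕ) : Finset (ZMod n) :=
  (Finset.range ℓ).image (fun t : ℕ => r + (t : ZMod n))

/-- The cyclic closed interval `[a,b] = {a, a+1, …, b}` in `ZMod n`. -/
def cIcc (n : ℕ) (a b : ZMod n) : Finset (ZMod n) := cSeg n a ((b - a).val + 1)

/-- The Plücker coordinate `P(I)`: the determinant of the `k × k` submatrix of `M` on the
columns indexed by `I`, taken in increasing order of the representatives in `{1,…,n}`;
it is `0` if `I` is not a `k`-subset. -/
noncomputable def pluck {R : Type*} [CommRing R] {k n : ℕ}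
    (M : Matrix (Fin k) (ZMod n) R) (I : Finset (ZMod n)) : R :=
  if h : (I.image (rep n)).card = k ∧ I.card = k then
    Matrix.det (Matrix.of fun i j : Fin k =>
      M i ((((I.image (rep n)).orderIsoOfFin h.1 j : ℕ) : ZMod n)))
  else 0

open Finset

lemma Fin.prod_prod_Iio_mul_eq_pow {N : ℕ} {M : Type*} [CommMonoid M] (g : Fin N → M) :
    ∏ j, ∏ i ∈ Iio j, g i * g j = (∏ i, g i) ^ (N - 1) := by
  have hleft : ∏ j, ∏ i ∈ Iio j, g i = ∏ i, g i ^ (N - 1 - i) := by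
    rw [prod_comm' (t' := univ) (s' := fun i => Ioi i) (by simp)]
    simp only [Finset.prod_const, Fin.card_Ioi]
  rw [← prod_pow]
  simp only [prod_mul_distrib, Finset.prod_const, Fin.card_Iio, hleft]
  rw [← prod_mul_distrib]
  exact prod_congr rfl fun i _ => by rw [← pow_add, Nat.sub_add_cancel (by omega)]

def inversionSign {α : Type*} [LinearOrder α] {N : ℕ} (v : Fin N → α) : ℤˣ :=
  ∏ j, ∏ i ∈ Iio j, if v i < v j then 1 else -1

section InversionSign

variable {α β : Type*} [LinearOrder α] [LinearOrder β] {N : ℕ}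

lemma inversionSign_congr {v : Fin N → α} {u : Fin N → β}
    (h : ∀ i j, i < j → (v i < v j ↔ u i < u j)) : inversionSign v = inversionSign u :=
  prod_congr rfl fun j _ => prod_congr rfl fun i hi => if_congr (h i j (mem_Iio.1 hi)) rfl rfl

lemma inversionSign_of_strictMono {v : Fin N → α} (hv : StrictMono v) : inversionSign v = 1 :=
  prod_eq_one fun _ _ => prod_eq_one fun _ hi => if_pos (hv (mem_Iio.1 hi))

lemma Equiv.Perm.sign_eq_inversionSign {v : Fin N → α} {σ : Equiv.Perm (Fin N)}
    (h : StrictMono (v ∘ σ)) : Equiv.Perm.sign σ = inversionSign v := by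
  rw [← Equiv.Perm.sign_inv, Equiv.Perm.sign_eq_prod_prod_Iio]
  refine inversionSign_congr fun i j _ => ?_
  simpa using (h.lt_iff_lt (a := σ⁻¹ i) (b := σ⁻¹ j)).symm

lemma inversionSign_snoc (u : Fin N → α) (x : α) :
    inversionSign (Fin.snoc u x : Fin (N + 1) → α) =
      inversionSign u * ∏ i, if u i < x then 1 else -1 := by
  rw [inversionSign, Fin.prod_univ_castSucc, Fin.Iio_last_eq_map, prod_map]
  simp only [Fin.Iio_castSucc, prod_map, Fin.coe_castSuccEmb, Fin.snoc_castSucc, Fin.snoc_last]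
  rfl

lemma inversionSign_eq_mul_pow {v : Fin N → α} {u : Fin N → β} (g : Fin N → ℤˣ)
    (h : ∀ i j, i < j → ((if v i < v j then 1 else -1 : ℤˣ) =
      (if u i < u j then 1 else -1) * (g i * g j))) :
    inversionSign v = inversionSign u * (∏ i, g i) ^ (N - 1) := by
  rw [inversionSign, inversionSign, ← Fin.prod_prod_Iio_mul_eq_pow, ← prod_mul_distrib]
  refine prod_congr rfl fun j _ => ?_
  rw [← prod_mul_distrib]
  exact prod_congr rfl fun i hi => h i j (mem_Iio.1 hi)

end InversionSign

namespace ZMod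

variable {n : ℕ} [NeZero n]

lemma val_sub_eq_ite (a b : ZMod n) :
    (a - b).val = if b.val ≤ a.val then a.val - b.val else a.val + n - b.val := by
  split_ifs with h
  · exact val_sub h
  · have hba : b - a ≠ 0 := sub_ne_zero.2 fun hba => h (hba ▸ le_rfl)
    rw [← neg_sub, neg_val, if_neg hba, val_sub (by omega)]
    have := b.val_lt
    omega

lemma val_sub_lt_val_sub_iff {x y : ZMod n} (hxy : x ≠ y) (a c : ZMod n) :
    (x - a).val < (y - a).val ↔
      ((x - c).val < (y - c).val ↔ ((x - c).val < (a - c).val ↔ (y - c).val < (a - c).val)) := by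
  have hval : (x - c).val ≠ (y - c).val := fun h => hxy (by simpa using val_injective n h)
  rw [show x - a = (x - c) - (a - c) by ring, show y - a = (y - c) - (a - c) by ring,
    val_sub_eq_ite (x - c), val_sub_eq_ite (y - c)]
  have := (x - c).val_lt
  have := (y - c).val_lt
  have := (a - c).val_lt
  split_ifs <;> omega

end ZMod

namespace Matrix

variable {R : Type*} [CommRing R] {N : ℕ}

lemma det_submatrix_eq_zero_of_not_injective {m ι : Type*} [Fintype m] [DecidableEq m]
    (M : Matrix m ι R) {φ : m → ι} (hφ : ¬ Function.Injective φ) :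
    (M.submatrix id φ).det = 0 := by
  obtain ⟨a, b, hab, hne⟩ : ∃ a b, φ a = φ b ∧ a ≠ b := by
    simpa [Function.Injective] using hφ
  exact det_zero_of_column_eq hne fun _ => by simp [hab]

lemma det_mul_eq_zero_of_fin_succ (A : Matrix (Fin (N + 1)) (Fin N) R)
    (B : Matrix (Fin N) (Fin (N + 1)) R) : (A * B).det = 0 := by
  let A' : Matrix (Fin (N + 1)) (Fin (N + 1)) R := of fun i => Fin.snoc (A i) 0
  let B' : Matrix (Fin (N + 1)) (Fin (N + 1)) R :=
    of fun l j => Fin.snoc (α := fun _ => R) (B · j) 0 l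
  have hAB : A * B = A' * B' := by
    ext i j
    simp [A', B', mul_apply, Fin.sum_univ_castSucc]
  rw [hAB, det_mul, det_eq_zero_of_column_eq_zero (Fin.last N) (fun i => by simp [A']), zero_mul]

lemma det_of_det_submatrix_snoc_eq_zero {ι : Type*} (M : Matrix (Fin (N + 1)) ι R)
    (f : Fin (N + 1 + 1) → Fin N → ι) (g : Fin (N + 1 + 1) → ι) :
    (of fun i j => (M.submatrix id (Fin.snoc (f i) (g j))).det).det = 0 := by
  let C : Fin (N + 1 + 1) → Matrix (Fin (N + 1)) (Fin (N + 1)) R :=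
    fun i => M.submatrix id (Fin.snoc (f i) (g 0))
  have hcol : ∀ i j, M.submatrix id (Fin.snoc (f i) (g j)) =
      (C i).updateCol (Fin.last N) (fun a => M a (g j)) := by
    intro i j
    ext a b
    induction b using Fin.lastCases <;> simp [C]
  have hD : (of fun i j => (M.submatrix id (Fin.snoc (f i) (g j))).det) =
      (of fun i l => (C i).adjugate (Fin.last N) l) * of fun l j => M l (g j) := by
    ext i j
    rw [of_apply, hcol, ← cramer_apply, cramer_eq_adjugate_mulVec, mul_apply]
    rfl
  rw [hD, det_mul_eq_zero_of_fin_succ]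

end Matrix

lemma rep_eq_val_sub_one_add_one {n : ℕ} [NeZero n] (z : ZMod n) : rep n z = (z - 1).val + 1 := by
  rcases n with _ | _ | n
  · exact absurd rfl (NeZero.ne 0)
  · revert z; decide
  · have : Fact (1 < n + 2) := ⟨by omega⟩
    rw [rep, ZMod.val_sub_eq_ite, ZMod.val_one]
    split_ifs <;> omega

lemma natCast_rep {n : ℕ} [NeZero n] (z : ZMod n) : ((rep n z : ℕ) : ZMod n) = z := by
  unfold rep
  split_ifs with h
  · rw [ZMod.natCast_self, eq_comm, ← ZMod.val_eq_zero, h]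
  · exact ZMod.natCast_zmod_val z

lemma rep_injective {n : ℕ} [NeZero n] : Function.Injective (rep n) :=
  Function.LeftInverse.injective natCast_rep

lemma cSeg_eq_image (n : ℕ) (a : ZMod n) (ℓ : ℕ) :
    cSeg n a ℓ = univ.image fun t : Fin ℓ => a + (t : ℕ) := by
  ext z; simp [cSeg, Fin.exists_iff]

lemma exists_eq_add_of_mem_cIcc {n k : ℕ} {r m : ZMod n} (hkn : k + 2 ≤ n)
    (hm : m ∈ cIcc n (r + k) (r - 2)) : ∃ d : ℕ, k ≤ d ∧ d + 2 ≤ n ∧ m = r + d := by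
  have : NeZero n := ⟨by omega⟩
  have hlen : (r - 2 - (r + k)).val = n - (k + 2) := by
    rw [show r - 2 - (r + k) = -((k + 2 : ℕ) : ZMod n) by push_cast; ring, ZMod.neg_val]
    split_ifs with h
    · rw [ZMod.natCast_eq_zero_iff] at h
      have := Nat.le_of_dvd (Nat.succ_pos _) h
      omega
    · obtain hlt | rfl := hkn.lt_or_eq
      · rw [ZMod.val_cast_of_lt hlt]
      · exact absurd (ZMod.natCast_self _) h
  simp only [cIcc, cSeg, hlen, mem_image, mem_range] at hm
  obtain ⟨t, ht, rfl⟩ := hm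
  exact ⟨k + t, by omega, by omega, by push_cast; ring⟩

/-- `-1` exactly when `z` lies in the cyclic interval `[c, 0]`, i.e. is passed when the base point
of the cyclic order moves from `c` to `1`. -/
def wrapSign {n : ℕ} (c z : ZMod n) : ℤˣ := if (z - c).val < (1 - c).val then -1 else 1

lemma inversionSign_rep_comp {n N : ℕ} [NeZero n] (c : ZMod n) {φ : Fin N → ZMod n}
    (hφ : Function.Injective φ) :
    inversionSign (rep n ∘ φ) =
      inversionSign (fun b => (φ b - c).val) * (∏ b, wrapSign c (φ b)) ^ (N - 1) := by
  refine inversionSign_eq_mul_pow _ fun i j hij => ?_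
  have key := ZMod.val_sub_lt_val_sub_iff (hφ.ne hij.ne) 1 c
  simp only [Function.comp_apply, rep_eq_val_sub_one_add_one, add_lt_add_iff_right, wrapSign]
  rw [if_congr key rfl rfl]
  by_cases h1 : (φ i - c).val < (φ j - c).val <;> by_cases h2 : (φ i - c).val < (1 - c).val <;>
    by_cases h3 : (φ j - c).val < (1 - c).val <;> simp [h1, h2, h3]

lemma pluck_image_eq {R : Type*} [CommRing R] {k n : ℕ} [NeZero n]
    (M : Matrix (Fin k) (ZMod n) R) (φ : Fin k → ZMod n) :
    pluck M (univ.image φ) = (inversionSign (rep n ∘ φ) : ℤ) * (M.submatrix id φ).det := by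
  by_cases hφ : Function.Injective φ
  · have hI : (univ.image φ).card = k := by rw [card_image_of_injective _ hφ, card_fin]
    have hJ : ((univ.image φ).image (rep n)).card = k := by
      rw [card_image_of_injective _ rep_injective, hI]
    set σ := Tuple.sort (rep n ∘ φ)
    have hσ : StrictMono (rep n ∘ φ ∘ σ) := (Tuple.monotone_sort _).strictMono_of_injective
      ((rep_injective.comp hφ).comp σ.injective)
    have hcols : ∀ b,
        (((univ.image φ).image (rep n)).orderIsoOfFin hJ b : ℕ) = rep n (φ (σ b)) := by
      intro b
      rw [Finset.coe_orderIsoOfFin_apply, ← Finset.orderEmbOfFin_unique hJ (fun b => by simp) hσ]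
      rfl
    rw [pluck, dif_pos ⟨hJ, hI⟩, ← Equiv.Perm.sign_eq_inversionSign hσ, ← Matrix.det_permute']
    congr 1
    ext a b
    simp [hcols, natCast_rep]
  · have hcard : (univ.image φ).card ≠ k := fun h => hφ <| by
      simpa using (card_image_iff.1 (h.trans (card_fin k).symm))
    rw [pluck, dif_neg (fun h => hcard h.2), M.det_submatrix_eq_zero_of_not_injective hφ, mul_zero]

lemma cSeg_union_eq_image_snoc {n : ℕ} (a x : ZMod n) (ℓ : ℕ) :
    cSeg n a ℓ ∪ {x} = univ.image (Fin.snoc (fun t : Fin ℓ => a + (t : ℕ)) x) := by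
  ext z
  simp [cSeg_eq_image, Fin.exists_fin_succ', or_comm, eq_comm]

/-- Read as offsets from `r`, with `m = r + d`: if `m + j` avoids the segment `[r + i]^K`, it comes
after the segment exactly when it has not wrapped past `r`. -/
lemma add_lt_add_mod_iff_le_add_mod {n K d i j t : ℕ} (hi : i ≤ K + 1) (hj : j ≤ K + 1)
    (ht : t < K) (hKd : K + 1 ≤ d) (hdn : d + 2 ≤ n) (hne : ∀ s < K, i + s ≠ (d + j) % n) :
    i + t < (d + j) % n ↔ d ≤ (d + j) % n := by
  have hmod : (d + j) % n = if d + j < n then d + j else d + j - n := by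
    split_ifs with h
    · exact Nat.mod_eq_of_lt h
    · rw [Nat.mod_eq_sub_mod (by omega), Nat.mod_eq_of_lt (by omega)]
  by_cases hseg : i ≤ (d + j) % n ∧ (d + j) % n < i + K
  · exact (hne ((d + j) % n - i) (by omega) (by omega)).elim
  · split_ifs at hmod <;> omega

lemma pluck_segment_union_eq {R : Type*} [CommRing R] {K n d : ℕ}
    (M : Matrix (Fin (K + 1)) (ZMod n) R) (r : ZMod n) (hKn : 2 * K < n) (hKd : K + 1 ≤ d)
    (hdn : d + 2 ≤ n) (i j : Fin (K + 1 + 1)) :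
    pluck M (cSeg n (r + (i : ℕ)) K ∪ {r + d + (j : ℕ)}) =
      ((((∏ t : Fin K, wrapSign r (r + (i : ℕ) + (t : ℕ))) ^ K *
        (wrapSign r (r + d + (j : ℕ)) * if d ≤ (d + j) % n then 1 else -1) ^ K : ℤˣ) : ℤ) : R) *
      (M.submatrix id
        (Fin.snoc (fun t : Fin K => r + (i : ℕ) + (t : ℕ)) (r + d + (j : ℕ)))).det := by
  have : NeZero n := ⟨by omega⟩
  rw [cSeg_union_eq_image_snoc, pluck_image_eq]
  set φ : Fin (K + 1) → ZMod n :=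
    Fin.snoc (fun t : Fin K => r + (i : ℕ) + (t : ℕ)) (r + d + (j : ℕ))
  by_cases hφ : Function.Injective φ
  swap
  · rw [M.det_submatrix_eq_zero_of_not_injective hφ, mul_zero, mul_zero]
  set q := (d + j) % n with hq
  have hoff : (fun b => (φ b - r).val) = Fin.snoc (fun t : Fin K => (i : ℕ) + (t : ℕ)) q := by
    ext b
    induction b using Fin.lastCases with
    | last =>
      simp only [φ, Fin.snoc_last, hq]
      rw [show r + d + j - r = ((d + j : ℕ) : ZMod n) by push_cast; ring, ZMod.val_natCast]
    | cast t =>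
      simp only [φ, Fin.snoc_castSucc, add_assoc, add_sub_cancel_left]
      rw [← Nat.cast_add, ZMod.val_cast_of_lt (by omega)]
  have hne : ∀ s < K, (i : ℕ) + s ≠ q := by
    intro s hs h
    have h1 := congrFun hoff (Fin.castSucc ⟨s, hs⟩)
    have h2 := congrFun hoff (Fin.last K)
    simp only [Fin.snoc_castSucc, Fin.snoc_last] at h1 h2
    exact (Fin.castSucc_lt_last _).ne
      (hφ (sub_left_injective (ZMod.val_injective n (h1.trans (h.trans h2.symm)))))
  have hsign : ∀ t : Fin K, (i : ℕ) + t < q ↔ d ≤ q := fun t =>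
    add_lt_add_mod_iff_le_add_mod (Nat.lt_succ_iff.1 i.isLt) (Nat.lt_succ_iff.1 j.isLt) t.isLt
      hKd hdn hne
  rw [inversionSign_rep_comp r hφ, Nat.add_sub_cancel, hoff, inversionSign_snoc,
    inversionSign_of_strictMono (fun a b h => by simpa using h), one_mul, Fin.prod_univ_castSucc]
  simp only [φ, Fin.snoc_castSucc, Fin.snoc_last, if_congr (hsign _) rfl rfl, prod_const, card_univ,
    Fintype.card_fin]
  push_cast
  ring

theorem statement2 {R : Type*} [CommRing R] (k n : ℕ) (hk : 2 ≤ k) (hkn : 2 * k ≤ n)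
    (M : Matrix (Fin k) (ZMod n) R) (r m : ZMod n)
    (hm : m ∈ cIcc n (r + (k : ZMod n)) (r - 2)) :
    Matrix.det (Matrix.of fun i j : Fin (k + 1) =>
        pluck M (cSeg n (r + ((i : ℕ) : ZMod n)) (k - 1) ∪ {m + ((j : ℕ) : ZMod n)})) = 0 := by
  obtain ⟨K, rfl⟩ : ∃ K, k = K + 1 := ⟨k - 1, by omega⟩
  obtain ⟨d, hKd, hdn, rfl⟩ := exists_eq_add_of_mem_cIcc (by omega) hm
  simp only [Nat.add_sub_cancel, pluck_segment_union_eq M r (by omega) hKd hdn, Units.val_mul,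
    Int.cast_mul, mul_assoc]
  refine (Matrix.det_mul_column _ _).trans (mul_eq_zero_of_right _ ?_)
  refine (Matrix.det_mul_row _ _).trans (mul_eq_zero_of_right _ ?_)
  exact Matrix.det_of_det_submatrix_snoc_eq_zero _ _ _
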